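/- Let n ∈ ℕ, p > q > 0, and α > 0. Let z ∈ ℝⁿ be a vector each of whose coordinates equals either √α·p or √α·q, and let V₁ = {i : z_i = √α·p}. Let ẑ ∈ ℝⁿ be arbitrary, set the threshold τ = √α·(p+q)/2, and let V̂₁ = {i : ẑ_i > τ}. Let E = (V₁ \ V̂₁) ∪ (V̂₁ \ V₁) be the set of misclassified coordinates. Then |E| ≤ 4‖ẑ − z‖² / (α·(p−q)²), where ‖·‖ is the Euclidean norm. -/

import Mathlib

open Matrix

/-- The `j`-th largest singular value (1-indexed) of a real `n × m` matrix,
defined as the square root of the `j`-th largest eigenvalue of `Aᵀ * A`;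
it is `0` when `j = 0` or `j > m`. -/
noncomputable def sval {n m : ℕ} (A : Matrix (Fin n) (Fin m) ℝ) (j : ℕ) : ℝ :=
  if 1 ≤ j ∧ j ≤ m then
    (((Finset.univ.val.map fun i =>
        Real.sqrt ((show (Aᵀ * A).IsHermitian by simpa using Matrix.isHermitian_conjTranspose_mul_self A).eigenvalues i)).sort (· ≤ ·)).getD
      (m - j) 0)
  else 0

/-- The spectral norm (ℓ₂ operator norm) of a real matrix, i.e. its largest singular value. -/
noncomputable def matrixSpectralNorm {n m : ℕ} (A : Matrix (Fin n) (Fin m) ℝ) : ℝ := sval A 1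

/-- Euclidean norm of a vector. -/
noncomputable def evnorm {n : ℕ} (x : Fin n → ℝ) : ℝ := Real.sqrt (∑ i, (x i) ^ 2)

/-- `M^{1/2}`: the unique positive semidefinite square root of a positive semidefinite
real matrix (junk value `0` if `M` is not positive semidefinite). -/
noncomputable def msqrt {k : ℕ} (M : Matrix (Fin k) (Fin k) ℝ) : Matrix (Fin k) (Fin k) ℝ :=
  by classical exact if h : M.PosSemidef then ((h.1.eigenvectorUnitary : Matrix (Fin k) (Fin k) ℝ) * diagonal (fun i => Real.sqrt (h.1.eigenvalues i)) * (star h.1.eigenvectorUnitary : Matrix (Fin k) (Fin k) ℝ)) else 0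


/-! A misclassified coordinate of `ẑ` lies on the wrong side of the midpoint `τ` between the two
levels `√α q < √α p`, so it is at distance at least `√α (p - q) / 2` from the corresponding
coordinate of `z`; summing these squared gaps over `E` bounds `|E| α (p - q)² / 4` by `‖ẑ - z‖²`. -/

theorem evnorm_sq {n : ℕ} (x : Fin n → ℝ) : evnorm x ^ 2 = ∑ i, x i ^ 2 :=
  Real.sq_sqrt (by positivity)

theorem card_mul_sq_le_sum_sq {ι : Type*} [Fintype ι] (E : Finset ι) (x : ι → ℝ) {δ : ℝ}
    (hδ : 0 ≤ δ) (hE : ∀ i ∈ E, δ ≤ |x i|) :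
    (E.card : ℝ) * δ ^ 2 ≤ ∑ i, x i ^ 2 :=
  calc (E.card : ℝ) * δ ^ 2 = ∑ _i ∈ E, δ ^ 2 := by rw [Finset.sum_const, nsmul_eq_mul]
    _ ≤ ∑ i ∈ E, x i ^ 2 := Finset.sum_le_sum fun i hi => by
        simpa only [sq_abs] using pow_le_pow_left₀ hδ (hE i hi) 2
    _ ≤ ∑ i, x i ^ 2 := Finset.sum_le_sum_of_subset_of_nonneg (Finset.subset_univ E)
        fun _ _ _ => sq_nonneg _

theorem half_sub_le_abs_sub_of_le_midpoint {a b y : ℝ} (hy : y ≤ (a + b) / 2) :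
    (b - a) / 2 ≤ |y - b| :=
  le_abs.mpr (Or.inr (by linarith))

theorem half_sub_le_abs_sub_of_midpoint_lt {a b y : ℝ} (hy : (a + b) / 2 < y) :
    (b - a) / 2 ≤ |y - a| :=
  le_abs.mpr (Or.inl (by linarith))

open scoped Classical in
theorem thresholding_error_bound_general
    {n : ℕ} (p q α : ℝ) (hpq : q < p) (hα : 0 < α)
    (z zhat : Fin n → ℝ)
    (hz : ∀ i, z i = Real.sqrt α * p ∨ z i = Real.sqrt α * q)
    (V₁ Vhat₁ : Finset (Fin n))
    (hV₁ : V₁ = Finset.univ.filter fun i => z i = Real.sqrt α * p)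
    (τ : ℝ) (hτ : τ = Real.sqrt α * (p + q) / 2)
    (hVhat₁ : Vhat₁ = Finset.univ.filter fun i => zhat i > τ)
    (E : Finset (Fin n)) (hE : E = (V₁ \ Vhat₁) ∪ (Vhat₁ \ V₁)) :
    (E.card : ℝ) ≤ 4 * evnorm (zhat - z) ^ 2 / (α * (p - q) ^ 2) := by
  set a := Real.sqrt α * q
  set b := Real.sqrt α * p
  have hτ' : τ = (a + b) / 2 := by rw [hτ]; ring
  have hgap : ∀ i ∈ E, (b - a) / 2 ≤ |(zhat - z) i| := by
    intro i hi
    simp only [hE, hV₁, hVhat₁, Finset.mem_union, Finset.mem_sdiff, Finset.mem_filter,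
      Finset.mem_univ, true_and, not_lt, hτ'] at hi
    rcases hi with ⟨hzb, hle⟩ | ⟨hlt, hzb⟩
    · simpa only [Pi.sub_apply, hzb] using half_sub_le_abs_sub_of_le_midpoint hle
    · simpa only [Pi.sub_apply, (hz i).resolve_left hzb] using
        half_sub_le_abs_sub_of_midpoint_lt hlt
  have hab : 0 ≤ (b - a) / 2 :=
    div_nonneg (sub_nonneg.mpr (mul_le_mul_of_nonneg_left hpq.le (Real.sqrt_nonneg α))) zero_le_two
  have hcount := card_mul_sq_le_sum_sq E (zhat - z) hab hgap
  have hsq : ((b - a) / 2) ^ 2 = α * (p - q) ^ 2 / 4 := by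
    simp only [a, b]; rw [← mul_sub, div_pow, mul_pow, Real.sq_sqrt hα.le]; norm_num
  rw [hsq] at hcount
  rw [evnorm_sq, le_div_iff₀ (mul_pos hα (pow_pos (sub_pos.mpr hpq) 2))]
  linarith

open scoped Classical in
/-- thresholding error bound. If each coordinate of `z` equals `√α·p` or
`√α·q`, `V₁` is the set of coordinates equal to `√α·p`, and `V̂₁` is the set of coordinates
of `ẑ` exceeding the threshold `τ = √α(p+q)/2`, then the number of misclassified coordinates
is at most `4‖ẑ − z‖²/(α(p−q)²)`. -/
theorem thresholding_error_bound
    {n : ℕ} (p q α : ℝ) (hq : 0 < q) (hpq : q < p) (hα : 0 < α)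
    (z zhat : Fin n → ℝ)
    (hz : ∀ i, z i = Real.sqrt α * p ∨ z i = Real.sqrt α * q)
    (V₁ Vhat₁ : Finset (Fin n))
    (hV₁ : V₁ = Finset.univ.filter fun i => z i = Real.sqrt α * p)
    (τ : ℝ) (hτ : τ = Real.sqrt α * (p + q) / 2)
    (hVhat₁ : Vhat₁ = Finset.univ.filter fun i => zhat i > τ)
    (E : Finset (Fin n)) (hE : E = (V₁ \ Vhat₁) ∪ (Vhat₁ \ V₁)) :
    (E.card : ℝ) ≤ 4 * evnorm (zhat - z) ^ 2 / (α * (p - q) ^ 2) :=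
  thresholding_error_bound_general p q α hpq hα z zhat hz V₁ Vhat₁ hV₁ τ hτ hVhat₁ E hE
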